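/- arXiv:1103.2955 — 2 statements merged into one kernel-verified Lean document; each statement's English description precedes it below -/
import Mathlib

section
/- Let (I, ≤) be a directed poset and let G = lim G_i be the inverse limit of an inverse system {G_i, φ_ij, I} of pro-p groups. Suppose there is a constant d such that d(G_i) = d for all i ∈ I. If d(G) = d, then there exists j ∈ I such that the projection φ_j : G → G_j is surjective. -/
/-!
Basic notions for pro-`p` groups.  Throughout, a pro-`p` group is a compact,
Hausdorff, totally disconnected topological group (these assumptions are carried
as typeclass hypotheses) satisfying the predicate `IsProP`: every open normal
subgroup has index a power of `p`.
-/

universe u v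

/-- Every open normal subgroup has index a power of `p`. -/
def IsProP (p : ℕ) (G : Type u) [Group G] [TopologicalSpace G] : Prop :=
  ∀ N : Subgroup G, N.Normal → IsOpen (N : Set G) → ∃ n : ℕ, N.index = p ^ n

/-- The set `X` topologically generates `G`. -/
def TopGenerates (G : Type u) [Group G] [TopologicalSpace G] (X : Set G) : Prop :=
  closure ((Subgroup.closure X : Subgroup G) : Set G) = Set.univ

/-- `d(G)`: the minimal cardinality of a topological generating set of `G`, in `ℕ∞`. -/
noncomputable def dRank (G : Type u) [Group G] [TopologicalSpace G] : ℕ∞ :=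
  ⨅ X : {X : Set G // TopGenerates G X}, (X.1).encard

/-- A subgroup is procyclic if it is topologically generated by one of its elements. -/
def Subgroup.IsProcyclic {G : Type u} [Group G] [TopologicalSpace G] (C : Subgroup G) : Prop :=
  ∃ c ∈ C, (C : Set G) ⊆ closure ((Subgroup.closure {c} : Subgroup G) : Set G)

/-- The smallest closed normal subgroup containing a subset `S`. -/
def closedNormalClosure {G : Type u} [Group G] [TopologicalSpace G] (S : Set G) : Subgroup G :=
  sInf {N : Subgroup G | S ⊆ ↑N ∧ N.Normal ∧ IsClosed (N : Set G)}

/-- The Frattini subgroup of a topological group: the intersection of all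
maximal open (proper) subgroups. -/
def proPFrattini (G : Type u) [Group G] [TopologicalSpace G] : Subgroup G :=
  sInf {M : Subgroup G | IsOpen (M : Set G) ∧ IsCoatom M}

/-- A closed subgroup is (topologically) finitely generated. -/
def Subgroup.TopFG {G : Type u} [Group G] [TopologicalSpace G] (H : Subgroup G) : Prop :=
  ∃ S : Set G, S.Finite ∧ S ⊆ ↑H ∧
    (H : Set G) ⊆ closure ((Subgroup.closure S : Subgroup G) : Set G)

/-!  Inverse systems of (pro-`p`) groups over a directed poset and their inverse limits. -/

/-- The inverse limit of an inverse system of groups, as a subgroup of the product. -/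
def invLim {I : Type u} [Preorder I] (G : I → Type v) [∀ i, Group (G i)]
    (φ : ∀ i j : I, j ≤ i → (G i →* G j)) : Subgroup (∀ i, G i) where
  carrier := {x | ∀ (i j : I) (h : j ≤ i), φ i j h (x i) = x j}
  one_mem' := by intro i j h; simp
  mul_mem' := by intro a b ha hb i j h; simp [ha i j h, hb i j h]
  inv_mem' := by intro a ha i j h; simp [ha i j h]

/-- The projection from the inverse limit to the `i`-th group of the system. -/
def invLimProj {I : Type u} [Preorder I] (G : I → Type v) [∀ i, Group (G i)]
    (φ : ∀ i j : I, j ≤ i → (G i →* G j)) (i : I) : ↥(invLim G φ) →* G i :=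
  (Pi.evalMonoidHom G i).comp (invLim G φ).subtype

/-!
Write `V(K)` for the `𝔽_p`-space of continuous homomorphisms `K → 𝔽_p`. A subset of a pro-`p`
group `K` topologically generates it iff no nonzero element of `V(K)` vanishes on it (a proper
closed subgroup stays proper in some finite `p`-group quotient, where it lies in a maximal
subgroup, which is normal of index `p`), so `dim V(K) = d(K)`.

Every `χ ∈ V(G)` has open kernel, hence factors through the image of `G` in a finite quotient
`G_j / W`; by compactness the image of `G_i` in `G_j / W` equals that of `G` for `i` large, and
then `χ` extends to `G_i`. As `V(G)` is finite-dimensional, one `i` serves all `χ`, so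
`π_i^* : V(G_i) → V(G)` is onto, hence bijective since both sides have dimension `d`. Injectivity
of `π_i^*` says that no nonzero character of `G_i` kills the closed subgroup `π_i(G)`, so
`π_i(G) = G_i`.
-/

theorem IsPGroup.exists_ne_one_of_ne_top {p : ℕ} [Fact p.Prime] {Q : Type*} [Group Q] [Finite Q]
    (hQ : IsPGroup p Q) {D : Subgroup Q} (hD : D ≠ ⊤) :
    ∃ χ : Q →* Multiplicative (ZMod p), D ≤ χ.ker ∧ χ ≠ 1 := by
  obtain ⟨M, hM, hDM⟩ := (eq_top_or_exists_le_coatom D).resolve_left hD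
  have : M.Normal :=
    Subgroup.NormalizerCondition.normal_of_coatom M
      (@Group.normalizerCondition_of_isNilpotent _ _ hQ.isNilpotent) hM
  have hquot_top : ∀ z : Q ⧸ M, z ≠ 1 → Subgroup.zpowers z = ⊤ := by
    intro z hz
    obtain ⟨x, rfl⟩ := QuotientGroup.mk_surjective z
    have hxM : x ∉ M := fun h => hz ((QuotientGroup.eq_one_iff x).mpr h)
    have hlt : M < (Subgroup.zpowers (x : Q ⧸ M)).comap (QuotientGroup.mk' M) := by
      refine SetLike.lt_iff_le_and_exists.mpr ⟨fun m hm => ?_, x, Subgroup.mem_zpowers _, hxM⟩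
      simp [(QuotientGroup.eq_one_iff m).mpr hm]
    rw [← Subgroup.map_comap_eq_self_of_surjective (QuotientGroup.mk'_surjective M)
      (Subgroup.zpowers _), hM.2 _ hlt, Subgroup.map_top_of_surjective _
      (QuotientGroup.mk'_surjective M)]
  have hne : Nontrivial (Q ⧸ M) :=
    QuotientGroup.nontrivial_iff.mpr (lt_top_iff_ne_top.mpr hM.1).ne
  obtain ⟨n, hn⟩ := IsPGroup.iff_card.mp (hQ.to_quotient M)
  have hn0 : n ≠ 0 := by
    rintro rfl
    exact (Finite.one_lt_card_iff_nontrivial.mpr hne).ne' (by simpa using hn)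
  obtain ⟨z, hz⟩ := exists_prime_orderOf_dvd_card' (G := Q ⧸ M) p
    (hn ▸ dvd_pow_self p hn0)
  have hcard : Nat.card (Q ⧸ M) = p := by
    rw [← hz, ← Nat.card_zpowers, hquot_top z (by
      rintro rfl; exact (Fact.out : p.Prime).one_lt.ne' (by simpa using hz.symm)),
      Subgroup.card_top]
  let e := mulEquivOfPrimeCardEq hcard (by simp : Nat.card (Multiplicative (ZMod p)) = p)
  refine ⟨e.toMonoidHom.comp (QuotientGroup.mk' M), fun d hd => ?_, fun h => ?_⟩
  · simpa using hDM hd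
  · obtain ⟨x, hx⟩ := exists_ne (1 : Q ⧸ M)
    obtain ⟨y, rfl⟩ := QuotientGroup.mk_surjective x
    exact hx (e.injective (by simpa using DFunLike.congr_fun h y))

theorem Module.Dual.exists_encard_le_finrank_of_separating {R V ι : Type*} [Field R]
    [AddCommGroup V] [Module R V] [FiniteDimensional R V] (e : ι → Module.Dual R V)
    (he : ∀ v ≠ 0, ∃ i, e i v ≠ 0) :
    ∃ T : Set ι, T.encard ≤ Module.finrank R V ∧ ∀ v ≠ 0, ∃ i ∈ T, e i v ≠ 0 := by
  have hspan : Submodule.span R (Set.range e) = ⊤ :=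
    Submodule.span_eq_top_of_ne_zero fun v hv =>
      let ⟨i, hi⟩ := he v hv; ⟨e i, Set.mem_range_self i, hi⟩
  obtain ⟨b, hb, hbspan, hbli⟩ := exists_linearIndependent R (Set.range e)
  obtain ⟨T, hTb, hTinj⟩ := Set.exists_image_eq_and_injOn (e ⁻¹' b) e
  rw [Set.image_preimage_eq_of_subset hb] at hTb
  refine ⟨T, ?_, fun v hv => ?_⟩
  · rw [← hTinj.encard_image, hTb]
    have := (hbli.linearIndepOn_id' Subtype.range_coe).encard_le_toENat_rank
    rwa [← Module.finrank_eq_rank, Cardinal.toENat_nat, Subspace.dual_finrank_eq] at this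
  · by_contra! h
    have hker : Submodule.span R b ≤ LinearMap.ker (Module.Dual.eval R V v) := by
      rw [Submodule.span_le]
      rintro ℓ hℓ
      obtain ⟨i, hi, rfl⟩ := hTb ▸ hℓ
      exact h i hi
    rw [hbspan, hspan, top_le_iff] at hker
    exact hv ((Module.forall_dual_apply_eq_zero_iff R v).mp fun ℓ =>
      LinearMap.mem_ker.mp (hker ▸ Submodule.mem_top : ℓ ∈ _))

/-- The dual `Hom(K, 𝔽_p)` of the Frattini quotient of `K`; as `ZMod p` is discrete, continuity
means open kernel. -/
def modPChars (p : ℕ) (K : Type*) [Group K] [TopologicalSpace K] :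
    Submodule (ZMod p) (K → ZMod p) where
  carrier := {f | (∀ x y, f (x * y) = f x + f y) ∧ Continuous f}
  zero_mem' := ⟨by simp, continuous_const⟩
  add_mem' := fun ⟨hf, hfc⟩ ⟨hg, hgc⟩ =>
    ⟨fun x y => by simp only [Pi.add_apply, hf, hg]; abel, hfc.add hgc⟩
  smul_mem' := fun c _ ⟨hf, hfc⟩ =>
    ⟨fun x y => by simp only [Pi.smul_apply, hf, smul_add], hfc.const_smul c⟩

theorem exists_topGenerates_encard_eq_dRank (K : Type*) [Group K] [TopologicalSpace K] :
    ∃ X : Set K, TopGenerates K X ∧ X.encard = dRank K := by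
  have : Nonempty {X : Set K // TopGenerates K X} := ⟨⟨Set.univ, by simp [TopGenerates]⟩⟩
  obtain ⟨X, hX⟩ := ENat.exists_eq_iInf fun X : {X // TopGenerates K X} => X.1.encard
  exact ⟨X.1, X.2, hX⟩

namespace modPChars

variable {p : ℕ} {K L : Type*} [Group K] [TopologicalSpace K] [Group L] [TopologicalSpace L]

theorem apply_one {f : K → ZMod p} (hf : f ∈ modPChars p K) : f 1 = 0 := by
  simpa using hf.1 1 1

theorem toAdd_comp_mem (χ : K →* Multiplicative (ZMod p)) (hχ : Continuous χ) :
    Multiplicative.toAdd ∘ χ ∈ modPChars p K :=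
  ⟨fun x y => by simp, hχ⟩

theorem eq_zero_of_topGenerates {f : K → ZMod p} (hf : f ∈ modPChars p K) {X : Set K}
    (hX : TopGenerates K X) (hfX : ∀ x ∈ X, f x = 0) : f = 0 := by
  let χ : K →* Multiplicative (ZMod p) := MonoidHom.mk' (Multiplicative.ofAdd ∘ f) hf.1
  have hker : IsClosed (χ.ker : Set K) := isClosed_singleton.preimage hf.2
  have := closure_minimal ((Subgroup.closure_le χ.ker).mpr hfX) hker
  rw [hX] at this
  exact funext fun x => this (Set.mem_univ x)

def comap (π : K →* L) (hπ : Continuous π) : modPChars p L →ₗ[ZMod p] modPChars p K where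
  toFun f := ⟨f ∘ π, fun x y => by simp [f.2.1], f.2.2.comp hπ⟩
  map_add' _ _ := rfl
  map_smul' _ _ := rfl

theorem exists_comp_eq {Q : Type*} [Group Q] [TopologicalSpace Q] [DiscreteTopology Q]
    {f : K → ZMod p} (hf : f ∈ modPChars p K) {ρ : K →* Q} (hfρ : ∀ x, ρ x = 1 → f x = 0)
    {π : K →* L} {α : L →* Q} (hα : Continuous α) (hαπ : α.comp π = ρ) (hαρ : α.range ≤ ρ.range) :
    ∃ f' ∈ modPChars p L, f' ∘ π = f := by
  let χ : K →* Multiplicative (ZMod p) := MonoidHom.mk' (Multiplicative.ofAdd ∘ f) hf.1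
  let χρ : ρ.range →* Multiplicative (ZMod p) :=
    (QuotientGroup.lift ρ.ker χ fun x hx => congrArg Multiplicative.ofAdd (hfρ x hx)).comp
      (QuotientGroup.quotientKerEquivRange ρ).symm.toMonoidHom
  let α' : L →* ρ.range := α.codRestrict ρ.range fun y => hαρ ⟨y, rfl⟩
  refine ⟨_, toAdd_comp_mem (χρ.comp α')
    ((continuous_of_discreteTopology (f := χρ)).comp (hα.subtype_mk _)), funext fun x => ?_⟩
  have : α' (π x) = QuotientGroup.quotientKerEquivRange ρ (x : K ⧸ ρ.ker) :=
    Subtype.ext (DFunLike.congr_fun hαπ x)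
  simp [χρ, this]
  rfl

variable [Fact p.Prime]

theorem finite_and_finrank_le_of_dRank_le {n : ℕ} (h : dRank K ≤ n) :
    Module.Finite (ZMod p) (modPChars p K) ∧ Module.finrank (ZMod p) (modPChars p K) ≤ n := by
  obtain ⟨X, hX, hXeq⟩ := exists_topGenerates_encard_eq_dRank K
  obtain ⟨hXfin, hXn⟩ := Set.encard_le_coe_iff_finite_ncard_le.mp (hXeq ▸ h)
  have := hXfin.fintype
  let res : modPChars p K →ₗ[ZMod p] (X → ZMod p) :=
    (LinearMap.funLeft (ZMod p) (ZMod p) ((↑) : X → K)).comp (modPChars p K).subtype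
  have hres : Function.Injective res := fun f g hfg => by
    refine sub_eq_zero.mp (Subtype.ext (eq_zero_of_topGenerates (f - g).2 hX fun x hx => ?_))
    exact sub_eq_zero.mpr (congr_fun hfg ⟨x, hx⟩)
  have := Module.Finite.of_injective res hres
  refine ⟨this, (LinearMap.finrank_le_finrank_of_injective hres).trans ?_⟩
  rwa [Module.finrank_fintype_fun_eq_card, ← Set.toFinset_card, ← Set.ncard_eq_toFinset_card']

variable [IsTopologicalGroup K] [CompactSpace K] [TotallyDisconnectedSpace K]

theorem exists_ne_zero_of_ne_top (hpro : IsProP p K) {C : Subgroup K}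
    (hC : IsClosed (C : Set K)) (hCtop : C ≠ ⊤) :
    ∃ f ∈ modPChars p K, f ≠ 0 ∧ ∀ c ∈ C, f c = 0 := by
  obtain ⟨x, -, hx⟩ := SetLike.exists_of_lt hCtop.lt_top
  obtain ⟨N, hN⟩ := ProfiniteGrp.exist_openNormalSubgroup_sub_open_nhds_of_one
    (hC.isOpen_compl.preimage (continuous_const_mul x)) (by simpa using hx)
  have := Subgroup.quotient_finite_of_isOpen N.toSubgroup N.isOpen
  have := QuotientGroup.discreteTopology N.isOpen
  have hQ : IsPGroup p (K ⧸ N.toSubgroup) :=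
    let ⟨n, hn⟩ := hpro N.toSubgroup N.isNormal' N.isOpen; IsPGroup.of_card hn
  have hD : C.map (QuotientGroup.mk' N.toSubgroup) ≠ ⊤ := by
    intro h
    obtain ⟨c, hc, hcx⟩ : (x : K ⧸ N.toSubgroup) ∈ C.map (QuotientGroup.mk' N.toSubgroup) :=
      h ▸ Subgroup.mem_top _
    have : x⁻¹ * c ∈ N.toSubgroup := by
      simpa using N.toSubgroup.inv_mem (QuotientGroup.eq.mp hcx)
    exact hN this (by simpa using hc)
  obtain ⟨χ, hχD, hχ⟩ := hQ.exists_ne_one_of_ne_top hD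
  refine ⟨_, toAdd_comp_mem (χ.comp (QuotientGroup.mk' N.toSubgroup))
    ((continuous_of_discreteTopology (f := χ)).comp QuotientGroup.continuous_mk),
    fun h => hχ ?_, fun c hc => ?_⟩
  · ext y
    simpa using congr_fun h y
  · simpa using hχD (Subgroup.mem_map_of_mem _ hc)

theorem topGenerates_of_forall_eq_zero (hpro : IsProP p K) {T : Set K}
    (hT : ∀ f ∈ modPChars p K, (∀ x ∈ T, f x = 0) → f = 0) : TopGenerates K T := by
  by_contra hgen
  have hCtop : (Subgroup.closure T).topologicalClosure ≠ ⊤ := fun h =>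
    hgen (by rw [TopGenerates, ← Subgroup.topologicalClosure_coe, h, Subgroup.coe_top])
  obtain ⟨f, hf, hf0, hfC⟩ :=
    exists_ne_zero_of_ne_top hpro (Subgroup.isClosed_topologicalClosure _) hCtop
  exact hf0 (hT f hf fun x hx =>
    hfC x (Subgroup.le_topologicalClosure _ (Subgroup.subset_closure hx)))

theorem dRank_le_finrank (hpro : IsProP p K)
    [Module.Finite (ZMod p) (modPChars p K)] :
    dRank K ≤ Module.finrank (ZMod p) (modPChars p K) := by
  let e : K → Module.Dual (ZMod p) (modPChars p K) := fun x =>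
    (LinearMap.proj x).comp (modPChars p K).subtype
  have he : ∀ f ≠ 0, ∃ x, e x f ≠ 0 := fun f hf => by
    by_contra! h
    exact hf (Subtype.ext (funext h))
  obtain ⟨T, hTcard, hT⟩ := Module.Dual.exists_encard_le_finrank_of_separating e he
  have hgen : TopGenerates K T := topGenerates_of_forall_eq_zero hpro fun f hf hfT => by
    by_contra hne
    obtain ⟨x, hxT, hx⟩ := hT ⟨f, hf⟩ fun h => hne (congrArg Subtype.val h)
    exact hx (hfT x hxT)
  exact (iInf_le_of_le ⟨T, hgen⟩ le_rfl).trans hTcard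

theorem surjective_of_comap_injective (hpro : IsProP p K) [CompactSpace L] [T2Space K]
    {π : L →* K} (hπ : Continuous π) (hinj : Function.Injective (comap (p := p) π hπ)) :
    Function.Surjective π := by
  by_contra hns
  have hclosed : IsClosed (π.range : Set K) := by
    rw [MonoidHom.coe_range]; exact (isCompact_range hπ).isClosed
  obtain ⟨f, hf, hf0, hfπ⟩ := exists_ne_zero_of_ne_top hpro hclosed
    fun h => hns (MonoidHom.range_eq_top.mp h)
  refine hf0 (congrArg Subtype.val (hinj (a₁ := ⟨f, hf⟩) (a₂ := 0) (Subtype.ext ?_)))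
  exact funext fun x => hfπ _ ⟨x, rfl⟩

end modPChars

section InverseLimit

open Topology Pointwise

variable {I : Type*} [Preorder I] {G : I → Type*} [∀ i, Group (G i)]
  {φ : ∀ i j : I, j ≤ i → (G i →* G j)}

theorem map_invLimProj (g : invLim G φ) {i j : I} (h : j ≤ i) :
    φ i j h (invLimProj G φ i g) = invLimProj G φ j g :=
  g.2 i j h

variable [∀ i, TopologicalSpace (G i)]

theorem continuous_invLimProj (i : I) : Continuous (invLimProj G φ i) :=
  (continuous_apply i).comp continuous_subtype_val

variable (hcont : ∀ i j h, Continuous (φ i j h))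
include hcont

theorem isClosed_invLim [∀ i, T2Space (G i)] : IsClosed (invLim G φ : Set (∀ i, G i)) := by
  have : (invLim G φ : Set (∀ i, G i)) = ⋂ (i) (j) (h), {x | φ i j h (x i) = x j} := by
    ext; simp [invLim]
  rw [this]
  exact isClosed_iInter fun i => isClosed_iInter fun j => isClosed_iInter fun h =>
    isClosed_eq ((hcont i j h).comp (continuous_apply i)) (continuous_apply j)

theorem compactSpace_invLim [∀ i, CompactSpace (G i)] [∀ i, T2Space (G i)] :
    CompactSpace (invLim G φ) :=
  isCompact_iff_compactSpace.mp (isClosed_invLim hcont).isCompact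

variable [IsDirected I (· ≤ ·)]

section Profinite

variable [Nonempty I] [∀ i, IsTopologicalGroup (G i)] [∀ i, CompactSpace (G i)]
  [∀ i, TotallyDisconnectedSpace (G i)]

theorem exists_openNormalSubgroup_preimage_invLimProj_subset {U : Set (invLim G φ)}
    (hU : U ∈ 𝓝 1) : ∃ j, ∃ W : OpenNormalSubgroup (G j), invLimProj G φ j ⁻¹' W ⊆ U := by
  obtain ⟨u, hu, huU⟩ := (mem_nhds_subtype _ _ _).mp hU
  rw [nhds_pi, Filter.mem_pi'] at hu
  obtain ⟨S, t, ht, hSt⟩ := hu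
  obtain ⟨j, hj⟩ := S.exists_le
  have hV : ∀ᶠ y in 𝓝 (1 : G j), ∀ i ∈ S, ∀ hi : i ∈ S, φ j i (hj i hi) y ∈ t i := by
    refine (Filter.eventually_all_finset S).mpr fun i hi => ?_
    have := (hcont j i (hj i hi)).tendsto 1 (by simpa using ht i)
    filter_upwards [this] with y hy _ using hy
  obtain ⟨O, hOV, hO, h1O⟩ := mem_nhds_iff.mp hV
  obtain ⟨W, hW⟩ := ProfiniteGrp.exist_openNormalSubgroup_sub_open_nhds_of_one hO h1O
  refine ⟨j, W, fun g hg => huU (hSt fun i hi => ?_)⟩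
  have := hOV (hW hg) i hi hi
  rwa [map_invLimProj] at this

theorem isProP_invLim {p : ℕ} [Fact p.Prime] (hpro : ∀ i, IsProP p (G i)) :
    IsProP p (invLim G φ) := by
  intro N _ hN
  obtain ⟨j, W, hW⟩ := exists_openNormalSubgroup_preimage_invLimProj_subset hcont
    (hN.mem_nhds N.one_mem)
  let ψ := (QuotientGroup.mk' W.toSubgroup).comp (invLimProj G φ j)
  have hψN : ψ.ker ≤ N := fun g hg => hW ((QuotientGroup.eq_one_iff _).mp hg)
  obtain ⟨n, hn⟩ := hpro j W.toSubgroup W.isNormal' W.isOpen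
  have hdvd : N.index ∣ p ^ n := (Subgroup.index_dvd_of_le hψN).trans
    (Subgroup.index_ker ψ ▸ hn ▸ Subgroup.card_subgroup_dvd_card _)
  obtain ⟨m, -, hm⟩ := (Nat.dvd_prime_pow Fact.out).mp hdvd
  exact ⟨m, hm⟩

end Profinite

variable (hcomp : ∀ i j k (hij : j ≤ i) (hjk : k ≤ j),
  (φ j k hjk).comp (φ i j hij) = φ i k (hjk.trans hij))
include hcomp

theorem mem_range_invLimProj_of_forall_mem_range [∀ i, CompactSpace (G i)] [∀ i, T2Space (G i)]
    {j : I} {x : G j} (hx : ∀ i (h : j ≤ i), x ∈ Set.range (φ i j h)) :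
    x ∈ Set.range (invLimProj G φ j) := by
  -- compact nonempty approximations of the fibre of `invLimProj G φ j` over `x`
  let T : {i // j ≤ i} → Set (∀ k, G k) := fun i =>
    {y | y j = x ∧ ∀ a b (hab : b ≤ a), a ≤ i.1 → φ a b hab (y a) = y b}
  have hTdir : Directed (· ⊇ ·) T := fun i₁ i₂ => by
    obtain ⟨i, h₁, h₂⟩ := directed_of (· ≤ ·) i₁.1 i₂.1
    exact ⟨⟨i, i₁.2.trans h₁⟩, fun y hy => ⟨hy.1, fun a b hab ha => hy.2 a b hab (ha.trans h₁)⟩,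
      fun y hy => ⟨hy.1, fun a b hab ha => hy.2 a b hab (ha.trans h₂)⟩⟩
  have hTne : ∀ i, (T i).Nonempty := fun ⟨i, hji⟩ => by
    classical
    obtain ⟨g, hg⟩ := hx i hji
    refine ⟨fun k => if h : k ≤ i then φ i k h g else 1, by simpa [hji] using hg,
      fun a b hab ha => ?_⟩
    simpa [ha, hab.trans ha] using DFunLike.congr_fun (hcomp i a b ha hab) g
  have hTclosed : ∀ i, IsClosed (T i) := fun i => by
    simp only [T, Set.ofPred_and, Set.ofPred_forall]
    exact (isClosed_eq (continuous_apply j) continuous_const).inter <|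
      isClosed_iInter fun a => isClosed_iInter fun b => isClosed_iInter fun hab =>
        isClosed_iInter fun _ =>
          isClosed_eq ((hcont a b hab).comp (continuous_apply a)) (continuous_apply b)
  have : Nonempty {i // j ≤ i} := ⟨⟨j, le_rfl⟩⟩
  obtain ⟨y, hy⟩ := IsCompact.nonempty_iInter_of_directed_nonempty_isCompact_isClosed T hTdir
    hTne (fun i => (hTclosed i).isCompact) hTclosed
  rw [Set.mem_iInter] at hy
  refine ⟨⟨y, fun a b hab => ?_⟩, (hy ⟨j, le_rfl⟩).1⟩
  obtain ⟨i, hai, hji⟩ := directed_of (· ≤ ·) a j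
  exact (hy ⟨i, hji⟩).2 a b hab hai

theorem exists_range_subset_of_isOpen [∀ i, CompactSpace (G i)] [∀ i, T2Space (G i)]
    {j : I} {U : Set (G j)} (hU : IsOpen U) (hUrange : Set.range (invLimProj G φ j) ⊆ U) :
    ∃ i, ∃ h : j ≤ i, Set.range (φ i j h) ⊆ U := by
  have : Nonempty {i // j ≤ i} := ⟨⟨j, le_rfl⟩⟩
  have hdir : Directed (· ⊇ ·) fun i : {i // j ≤ i} => Set.range (φ i.1 j i.2) := fun i₁ i₂ => by
    obtain ⟨i, h₁, h₂⟩ := directed_of (· ≤ ·) i₁.1 i₂.1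
    refine ⟨⟨i, i₁.2.trans h₁⟩, ?_, ?_⟩ <;> rintro _ ⟨g, rfl⟩
    · exact ⟨φ i i₁.1 h₁ g, DFunLike.congr_fun (hcomp i i₁.1 j h₁ i₁.2) g⟩
    · exact ⟨φ i i₂.1 h₂ g, DFunLike.congr_fun (hcomp i i₂.1 j h₂ i₂.2) g⟩
  obtain ⟨⟨i, hji⟩, hi⟩ := exists_subset_nhds_of_isCompact' hdir
    (fun i => isCompact_range (hcont _ _ _)) (fun i => (isCompact_range (hcont _ _ _)).isClosed)
    fun x hx => hU.mem_nhds (hUrange (mem_range_invLimProj_of_forall_mem_range hcont hcomp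
      fun i h => Set.mem_iInter.mp hx ⟨i, h⟩))
  exact ⟨i, hji, hi⟩

variable {p : ℕ} [Nonempty I] [∀ i, IsTopologicalGroup (G i)] [∀ i, CompactSpace (G i)]
  [∀ i, T2Space (G i)] [∀ i, TotallyDisconnectedSpace (G i)]

theorem exists_mem_range_comap_invLimProj (χ : modPChars p (invLim G φ)) :
    ∃ i, χ ∈ LinearMap.range (modPChars.comap (invLimProj G φ i) (continuous_invLimProj i)) := by
  have hker : {g | χ.1 g = 0} ∈ 𝓝 1 :=
    χ.2.2.continuousAt.preimage_mem_nhds ((isOpen_discrete {0}).mem_nhds (modPChars.apply_one χ.2))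
  obtain ⟨j, W, hW⟩ := exists_openNormalSubgroup_preimage_invLimProj_subset hcont hker
  have hHW : IsOpen (((invLimProj G φ j).range : Set (G j)) * (W : Set (G j))) := W.isOpen.mul_left
  obtain ⟨i, hji, hi⟩ := exists_range_subset_of_isOpen hcont hcomp hHW fun x hx =>
    ⟨x, hx, 1, W.one_mem, mul_one x⟩
  have := QuotientGroup.discreteTopology W.isOpen
  let q := QuotientGroup.mk' W.toSubgroup
  have hαπ : (q.comp (φ i j hji)).comp (invLimProj G φ i) = q.comp (invLimProj G φ j) := by
    ext g
    simp [q, map_invLimProj]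
  have hαρ : (q.comp (φ i j hji)).range ≤ (q.comp (invLimProj G φ j)).range := by
    rintro _ ⟨y, rfl⟩
    obtain ⟨_, ⟨g, rfl⟩, w, hw, hgw⟩ := hi ⟨y, rfl⟩
    exact ⟨g, by simp [q, ← hgw]; exact hw⟩
  obtain ⟨f, hf, hfχ⟩ := modPChars.exists_comp_eq χ.2
    (fun g hg => hW ((QuotientGroup.eq_one_iff _).mp hg))
    (QuotientGroup.continuous_mk.comp (hcont i j hji)) hαπ hαρ
  exact ⟨i, ⟨f, hf⟩, Subtype.ext hfχ⟩

theorem exists_comap_invLimProj_surjective [Module.Finite (ZMod p) (modPChars p (invLim G φ))] :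
    ∃ i, Function.Surjective
      (modPChars.comap (p := p) (invLimProj G φ i) (continuous_invLimProj i)) := by
  classical
  obtain ⟨S, hS⟩ := Module.Finite.fg_top (R := ZMod p) (M := modPChars p (invLim G φ))
  choose idx hidx using exists_mem_range_comap_invLimProj (p := p) hcont hcomp
  obtain ⟨i, hi⟩ := (S.image idx).exists_le
  refine ⟨i, LinearMap.range_eq_top.mp (top_le_iff.mp (hS ▸ Submodule.span_le.mpr ?_))⟩
  intro χ hχ
  obtain ⟨f, hf⟩ := hidx χ
  have h := hi _ (Finset.mem_image_of_mem idx hχ)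
  rw [← hf]
  refine ⟨modPChars.comap (φ i _ h) (hcont _ _ _) f, Subtype.ext (funext fun g => ?_)⟩
  exact congrArg f.1 (map_invLimProj g h)

end InverseLimit

theorem invLim_exists_surjective_projection_general
    {p : ℕ} [Fact p.Prime]
    {I : Type u} [Preorder I] [IsDirected I (· ≤ ·)] [Nonempty I]
    (G : I → Type v) [∀ i, Group (G i)] [∀ i, TopologicalSpace (G i)]
    [∀ i, IsTopologicalGroup (G i)] [∀ i, CompactSpace (G i)] [∀ i, T2Space (G i)]
    [∀ i, TotallyDisconnectedSpace (G i)]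
    (hpro : ∀ i, IsProP p (G i))
    (φ : ∀ i j : I, j ≤ i → (G i →* G j))
    (hcont : ∀ (i j : I) (h : j ≤ i), Continuous (φ i j h))
    (hcomp : ∀ (i j k : I) (hij : j ≤ i) (hjk : k ≤ j),
      (φ j k hjk).comp (φ i j hij) = φ i k (hjk.trans hij))
    (d : ℕ)
    (hd : ∀ i, dRank (G i) = (d : ℕ∞))
    (hG : dRank ↥(invLim G φ) = (d : ℕ∞)) :
    ∃ j : I, Function.Surjective (invLimProj G φ j) := by
  have := compactSpace_invLim hcont
  have := (modPChars.finite_and_finrank_le_of_dRank_le (p := p) hG.le).1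
  obtain ⟨i, hsurj⟩ := exists_comap_invLimProj_surjective (p := p) hcont hcomp
  obtain ⟨_, hi⟩ := modPChars.finite_and_finrank_le_of_dRank_le (p := p) (hd i).le
  have hdG : d ≤ Module.finrank (ZMod p) (modPChars p (invLim G φ)) := by
    exact_mod_cast hG ▸ modPChars.dRank_le_finrank (isProP_invLim hcont hpro)
  refine ⟨i, modPChars.surjective_of_comap_injective (hpro i) (continuous_invLimProj i) ?_⟩
  exact (LinearMap.injective_iff_surjective_of_finrank_eq_finrank
    (le_antisymm (hi.trans hdG) (LinearMap.finrank_le_finrank_of_surjective hsurj))).mpr hsurj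

/-- **Lemma 2.1(a).** Let `G = lim Gᵢ` be the inverse limit of an inverse system
`{Gᵢ, φᵢⱼ, I}` of pro-`p` groups over a directed poset `I`, and suppose there is a
constant `d` with `d(Gᵢ) = d` for all `i`.  If `d(G) = d`, then some projection
`G → Gⱼ` is surjective. -/
theorem invLim_exists_surjective_projection
    {p : ℕ} [Fact p.Prime]
    {I : Type u} [Preorder I] [IsDirected I (· ≤ ·)] [Nonempty I]
    (G : I → Type v) [∀ i, Group (G i)] [∀ i, TopologicalSpace (G i)]
    [∀ i, IsTopologicalGroup (G i)] [∀ i, CompactSpace (G i)] [∀ i, T2Space (G i)]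
    [∀ i, TotallyDisconnectedSpace (G i)]
    (hpro : ∀ i, IsProP p (G i))
    (φ : ∀ i j : I, j ≤ i → (G i →* G j))
    (hcont : ∀ (i j : I) (h : j ≤ i), Continuous (φ i j h))
    (hid : ∀ i : I, φ i i le_rfl = MonoidHom.id (G i))
    (hcomp : ∀ (i j k : I) (hij : j ≤ i) (hjk : k ≤ j),
      (φ j k hjk).comp (φ i j hij) = φ i k (hjk.trans hij))
    (d : ℕ)
    (hd : ∀ i, dRank (G i) = (d : ℕ∞))
    (hG : dRank ↥(invLim G φ) = (d : ℕ∞)) :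
    ∃ j : I, Function.Surjective (invLimProj G φ j) :=
  invLim_exists_surjective_projection_general G hpro φ hcont hcomp d hd hG
end

section
/- Let G be a pro-p group acting continuously on a nonempty compact Hausdorff space X, and let (Ũ_n)_{n≥1} be a decreasing sequence of closed normal subgroups of G with ⋂_n Ũ_n = 1. Write G_n := G/Ũ_n with projections φ_n : G → G_n and φ_nm : G_n → G_m for m ≤ n, and let X_n := X/Ũ_n be the orbit space of the restricted Ũ_n-action, equipped with the induced continuous G_n-action. Let S_n ≤ G_n be closed subgroups with φ_nm(S_n) ≤ S_m for m ≤ n, and let S := {g ∈ G : φ_n(g) ∈ S_n for all n} be the induced closed subgroup of G. If the fixed-point set X_n^{S_n} is nonempty for every n, then the fixed-point set X^S is nonempty. -/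
/-!
Basic notions for pro-`p` groups.  Throughout, a pro-`p` group is a compact,
Hausdorff, totally disconnected topological group (these assumptions are carried
as typeclass hypotheses) satisfying the predicate `IsProP`: every open normal
subgroup has index a power of `p`.
-/

universe u v

/-!
Let `S = ⋂ₙ Sₙ`. The points of `X` whose image in `X/Uₙ` is fixed by `S` form a closed set
(the tube lemma, as `Uₙ` is compact), which contains the nonempty set of such points for `Sₙ`
and shrinks as `n` grows; by compactness of `X` these sets have a common point `x`. For
`s ∈ S`, the elements `u ∈ Uₙ` with `u • x = s • x` again form a decreasing sequence of nonempty
compact sets, so some `u` lies in `⋂ₙ Uₙ = 1`, i.e. `s • x = x`.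
-/

open Set

section FixedModulo

variable {G X : Type*} [Group G] [MulAction G X]

/-- The preimage in `X` of the points of the orbit space `X / U` fixed by `T`. -/
def fixedModulo (U T : Set G) : Set X := {x | ∀ s ∈ T, ∃ u ∈ U, s • x = u • x}

theorem fixedModulo_mono {U U' T T' : Set G} (hU : U ⊆ U') (hT : T' ⊆ T) :
    (fixedModulo U T : Set X) ⊆ fixedModulo U' T' :=
  fun _ hx s hs => (hx s (hT hs)).imp fun _ ⟨hu, h⟩ => ⟨hU hu, h⟩

variable [TopologicalSpace G] [TopologicalSpace X] [T2Space X] [ContinuousSMul G X]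

theorem isClosed_setOf_exists_mem_smul_eq {U : Set G} (hU : IsCompact U) (s : G) :
    IsClosed {x : X | ∃ u ∈ U, s • x = u • x} := by
  have : CompactSpace U := isCompact_iff_compactSpace.mp hU
  have hclosed : IsClosed {q : U × X | s • q.2 = (q.1 : G) • q.2} :=
    isClosed_eq (continuous_snd.const_smul s)
      ((continuous_subtype_val.comp continuous_fst).smul continuous_snd)
  convert isClosedMap_snd_of_compactSpace _ hclosed using 1
  ext x
  simp

theorem isClosed_fixedModulo {U : Set G} (hU : IsCompact U) (T : Set G) :
    IsClosed (fixedModulo U T : Set X) := by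
  simp only [fixedModulo, ofPred_forall]
  exact isClosed_biInter fun s _ => isClosed_setOf_exists_mem_smul_eq hU s

variable [CompactSpace G]

theorem eq_of_forall_exists_mem_smul_eq {U : ℕ → Set G} (hUclosed : ∀ n, IsClosed (U n))
    (hUanti : Antitone U) (hUinter : ⋂ n, U n ⊆ {1}) {x y : X}
    (h : ∀ n, ∃ u ∈ U n, u • x = y) : x = y := by
  have hclosed : ∀ n, IsClosed (U n ∩ {u | u • x = y}) := fun n =>
    (hUclosed n).inter (isClosed_eq (continuous_id.smul continuous_const) continuous_const)
  obtain ⟨u, hu⟩ := IsCompact.nonempty_iInter_of_sequence_nonempty_isCompact_isClosed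
    (fun n => U n ∩ {u | u • x = y}) (fun n => inter_subset_inter_left _ (hUanti n.le_succ)) h
    (hclosed 0).isCompact hclosed
  rw [mem_iInter] at hu
  have hu1 : u = 1 := hUinter (mem_iInter.mpr fun n => (hu n).1)
  simpa [hu1] using (hu 0).2

theorem iInter_fixedModulo_subset {U : ℕ → Set G} (hUclosed : ∀ n, IsClosed (U n))
    (hUanti : Antitone U) (hUinter : ⋂ n, U n ⊆ {1}) (T : Set G) :
    ⋂ n, (fixedModulo (U n) T : Set X) ⊆ {x | ∀ s ∈ T, s • x = x} := fun _ hx s hs =>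
  (eq_of_forall_exists_mem_smul_eq hUclosed hUanti hUinter fun n =>
    (mem_iInter.mp hx n s hs).imp fun _ ⟨hu, h⟩ => ⟨hu, h.symm⟩).symm

theorem nonempty_iInter_fixedModulo [CompactSpace X] {U : ℕ → Set G}
    (hUclosed : ∀ n, IsClosed (U n)) (hUanti : Antitone U) (T : Set G)
    (hne : ∀ n, (fixedModulo (U n) T : Set X).Nonempty) :
    (⋂ n, (fixedModulo (U n) T : Set X)).Nonempty :=
  IsCompact.nonempty_iInter_of_sequence_nonempty_isCompact_isClosed _
    (fun n => fixedModulo_mono (hUanti n.le_succ) subset_rfl) hne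
    (isClosed_fixedModulo (hUclosed 0).isCompact T).isCompact
    (fun n => isClosed_fixedModulo (hUclosed n).isCompact T)

end FixedModulo

/-- Closed subgroups `Sₙ` of `Gₙ = G/Uₙ` are encoded by their preimages in `G`, so that
`lim Sₙ = ⋂ₙ Sₙ`, and a point of `Xₙ = X/Uₙ` fixed by `Sₙ` by a point `x ∈ X` with
`s • x ∈ Uₙ • x` for all `s ∈ Sₙ`. -/
theorem fixed_point_of_invLim_general
    (G : Type u) [Group G] [TopologicalSpace G]
    [CompactSpace G]
    (X : Type v) [TopologicalSpace X] [CompactSpace X] [T2Space X]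
    [MulAction G X] [ContinuousSMul G X]
    (U : ℕ → Subgroup G)
    (hUclosed : ∀ n, IsClosed ((U n : Set G)))
    (hUmono : ∀ m n : ℕ, m ≤ n → U n ≤ U m)
    (hUinter : (⨅ n, U n) = ⊥)
    (S : ℕ → Subgroup G)
    (hfix : ∀ n, ∃ x : X, ∀ s ∈ S n, ∃ u ∈ U n, s • x = u • x) :
    ∃ x : X, ∀ s ∈ ⨅ n, S n, s • x = x := by
  have hUanti : Antitone fun n => (U n : Set G) := fun m n h => hUmono m n h
  have hUinter' : ⋂ n, (U n : Set G) ⊆ {1} := by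
    rw [← Subgroup.coe_iInf, hUinter, Subgroup.coe_bot]
  have hne : ∀ n, (fixedModulo (U n : Set G) (⨅ n, S n : Subgroup G) : Set X).Nonempty :=
    fun n => (hfix n).imp fun _ hx => fixedModulo_mono subset_rfl (iInf_le S n) hx
  obtain ⟨x, hx⟩ := nonempty_iInter_fixedModulo hUclosed hUanti _ hne
  exact ⟨x, iInter_fixedModulo_subset hUclosed hUanti hUinter' _ hx⟩

/-- **Lemma 2.9.** Let a pro-`p` group `G` act continuously on a nonempty compact
Hausdorff space `X`, and let `(Uₙ)` be a decreasing sequence of closed normal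
subgroups of `G` with `⋂ₙ Uₙ = 1`.  Closed subgroups `Sₙ` of `Gₙ := G/Uₙ` with
`φₙₘ(Sₙ) ≤ Sₘ` correspond exactly to closed subgroups `Sₙ ≤ G` with `Uₙ ≤ Sₙ` and
`Sₙ ≤ Sₘ` for `m ≤ n`, and then `S := lim Sₙ = ⋂ₙ Sₙ`.  A point of the orbit space
`Xₙ := X/Uₙ` fixed by `Sₙ` is exactly a point `x ∈ X` with `s • x ∈ Uₙ • x` for all
`s ∈ Sₙ`.  If `Xₙ^{Sₙ} ≠ ∅` for all `n`, then `X^S ≠ ∅`. -/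
theorem fixed_point_of_invLim
    {p : ℕ} [Fact p.Prime]
    (G : Type u) [Group G] [TopologicalSpace G] [IsTopologicalGroup G]
    [CompactSpace G] [T2Space G] [TotallyDisconnectedSpace G]
    (hpro : IsProP p G)
    (X : Type v) [TopologicalSpace X] [Nonempty X] [CompactSpace X] [T2Space X]
    [MulAction G X] [ContinuousSMul G X]
    (U : ℕ → Subgroup G)
    (hUnormal : ∀ n, (U n).Normal)
    (hUclosed : ∀ n, IsClosed ((U n : Set G)))
    (hUmono : ∀ m n : ℕ, m ≤ n → U n ≤ U m)
    (hUinter : (⨅ n, U n) = ⊥)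
    (S : ℕ → Subgroup G)
    (hUS : ∀ n, U n ≤ S n)
    (hSclosed : ∀ n, IsClosed ((S n : Set G)))
    (hSmono : ∀ m n : ℕ, m ≤ n → S n ≤ S m)
    (hfix : ∀ n, ∃ x : X, ∀ s ∈ S n, ∃ u ∈ U n, s • x = u • x) :
    ∃ x : X, ∀ s ∈ ⨅ n, S n, s • x = x :=
  fixed_point_of_invLim_general G X U hUclosed hUmono hUinter S hfix
end
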